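/- Let n be a nonnegative integer and let ρ be a complex number with ρ ≠ 0 and ρ ≠ 1. Then the Apostol-Bernoulli polynomial has the representation 𝓑_n(ω;ρ) = Σ_{j=0}^{n} Σ_{s=0}^{j−1} (−1)^{j−1} · (C(n,j)/C(j−1,s)) · (j/(ρ−1)^j) · s! · B_s^{j−1}(ρ) · S₂(j−1,s) · ω^{n−j}, where B_s^{j−1}(ρ) is the Bernstein basis function. -/

import Mathlib

open Finset Nat

/-- The Apostol-Bernoulli polynomials `𝓑_n(ω;ρ)`, defined by the generating function
`t e^{ωt} / (ρ e^t - 1) = Σ_{n≥0} 𝓑_n(ω;ρ) t^n / n!` (as a formal power series). -/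
noncomputable def apostolBernoulliPoly (n : ℕ) (ω ρ : ℂ) : ℂ :=
  (n ! : ℂ) * PowerSeries.coeff (R := ℂ) n
    (PowerSeries.X * PowerSeries.rescale ω (PowerSeries.exp ℂ) *
      (ρ • PowerSeries.exp ℂ - 1)⁻¹)

/-- The Bernstein basis functions `B_d^k(ω) = C(k,d) ω^d (1−ω)^{k−d}` for `0 ≤ d ≤ k`,
and `0` otherwise. -/
noncomputable def bernsteinC (k d : ℕ) (ω : ℂ) : ℂ :=
  if d ≤ k then (k.choose d : ℂ) * ω ^ d * (1 - ω) ^ (k - d) else 0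

/-- The Stirling numbers of the second kind `S₂(n,c)`, defined by
`(e^t - 1)^c = Σ_{n≥0} c! S₂(n,c) t^n / n!`. -/
noncomputable def stirling2 (n c : ℕ) : ℂ :=
  ((n ! : ℂ) / (c ! : ℂ)) * PowerSeries.coeff (R := ℂ) n ((PowerSeries.exp ℂ - 1) ^ c)

/-! Write `ρ e^t - 1 = (ρ - 1)(1 - u)` with `u = ρ (e^t - 1) / (1 - ρ)`. Since `u` has no constant
term, the geometric series gives `1 / (ρ e^t - 1) = -∑_s ρ^s (e^t - 1)^s / (1 - ρ)^(s+1)`, and only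
`s ≤ m` contributes to the coefficient of `t^m`. Multiplying by `t e^{ωt}` and comparing
coefficients gives the formula, once `m! [t^m] (e^t - 1)^s = s! S₂(m,s)` is recognised and
`C(m,s) ρ^s (1 - ρ)^(m-s)` is absorbed into the Bernstein polynomial `B_s^m(ρ)`. -/

namespace PowerSeries

variable {K : Type*} [Field K]

theorem coeff_inv_one_sub {u : PowerSeries K} (hu : constantCoeff u = 0) (m : ℕ) :
    coeff m (1 - u)⁻¹ = ∑ s ∈ range (m + 1), coeff m (u ^ s) := by
  have hunit : constantCoeff (1 - u) ≠ 0 := by simp [hu]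
  have hsplit : (1 - u)⁻¹ = ∑ s ∈ range (m + 1), u ^ s + (1 - u)⁻¹ * u ^ (m + 1) :=
    calc (1 - u)⁻¹ = (1 - u)⁻¹ * ((1 - u) * ∑ s ∈ range (m + 1), u ^ s + u ^ (m + 1)) := by
          rw [mul_neg_geom_sum, sub_add_cancel, mul_one]
      _ = _ := by rw [mul_add, ← mul_assoc, PowerSeries.inv_mul_cancel _ hunit, one_mul]
  have htail : coeff m ((1 - u)⁻¹ * u ^ (m + 1)) = 0 :=
    X_pow_dvd_iff.mp ((pow_dvd_pow_of_dvd (X_dvd_iff.mpr hu) _).mul_left _) m (lt_add_one m)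
  rw [hsplit, map_add, htail, add_zero, map_sum]

variable [Algebra ℚ K]

theorem coeff_inv_smul_exp_sub_one {ρ : K} (hρ : ρ ≠ 1) (m : ℕ) :
    coeff m (ρ • exp K - 1)⁻¹ =
      -∑ s ∈ range (m + 1), ρ ^ s / (1 - ρ) ^ (s + 1) * coeff m ((exp K - 1) ^ s) := by
  have hρ' : 1 - ρ ≠ 0 := sub_ne_zero.mpr hρ.symm
  have hfactor : ρ • exp K - 1 = C (-(1 - ρ)) * (1 - C (ρ / (1 - ρ)) * (exp K - 1)) := by
    rw [mul_sub, mul_one, ← mul_assoc, ← map_mul, neg_mul, mul_div_cancel₀ _ hρ', smul_eq_C_mul]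
    simp only [map_neg, map_sub, map_one]
    ring
  rw [hfactor, PowerSeries.mul_inv_rev, C_inv, coeff_mul_C,
    coeff_inv_one_sub (by simp [constantCoeff_exp]), sum_mul, ← sum_neg_distrib]
  refine sum_congr rfl fun s _ => ?_
  rw [mul_pow, ← map_pow, coeff_C_mul, div_pow]
  field_simp
  ring

end PowerSeries

open PowerSeries in
theorem apostolBernoulliPoly_eq_sum_descFactorial_mul (n : ℕ) (ω ρ : ℂ) :
    apostolBernoulliPoly n ω ρ = ∑ k ∈ range n,
      (n.descFactorial (k + 1) : ℂ) * ω ^ (n - (k + 1)) * coeff k (ρ • exp ℂ - 1)⁻¹ := by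
  obtain _ | n := n
  · simp [apostolBernoulliPoly]
  rw [apostolBernoulliPoly, mul_assoc X, coeff_succ_X_mul, coeff_mul,
    Nat.sum_antidiagonal_eq_sum_range_succ_mk, mul_sum, ← sum_range_reflect]
  refine sum_congr rfl fun k hk => ?_
  have hk : k + 1 ≤ n + 1 := by simpa using hk
  have hfact := Nat.factorial_mul_descFactorial hk
  have hfact_ne : ((n - k)! : ℂ) ≠ 0 := Nat.cast_ne_zero.mpr (Nat.factorial_ne_zero _)
  simp only [Nat.succ_sub_one]
  rw [coeff_rescale, coeff_exp, Nat.add_sub_add_right, Nat.sub_sub_self (by omega), ← hfact]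
  push_cast
  field_simp

theorem summand_bernsteinC_stirling2_eq {n k s : ℕ} (hs : s ≤ k) (hk : k < n) (ρ ω : ℂ)
    (hρ : ρ ≠ 1) :
    (-1 : ℂ) ^ k * ((n.choose (k + 1) : ℂ) / (k.choose s : ℂ)) *
        (((k + 1 : ℕ) : ℂ) / (ρ - 1) ^ (k + 1)) * (s ! : ℂ) * bernsteinC k s ρ *
        stirling2 k s * ω ^ (n - (k + 1)) =
      -((n.descFactorial (k + 1) : ℂ) * ω ^ (n - (k + 1)) *
        (ρ ^ s / (1 - ρ) ^ (s + 1) * PowerSeries.coeff k ((PowerSeries.exp ℂ - 1) ^ s))) := by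
  obtain ⟨t, rfl⟩ := Nat.exists_eq_add_of_le hs
  have hρ' : 1 - ρ ≠ 0 := sub_ne_zero.mpr hρ.symm
  have hchoose : ((s + t).choose s : ℂ) ≠ 0 := by exact_mod_cast (Nat.choose_pos hs).ne'
  rw [bernsteinC, if_pos hs, stirling2, Nat.add_sub_cancel_left, show ρ - 1 = -(1 - ρ) by ring,
    neg_pow (1 - ρ), pow_succ (-1 : ℂ), Nat.descFactorial_eq_factorial_mul_choose,
    Nat.factorial_succ]
  have hfact_ne : (s ! : ℂ) ≠ 0 := Nat.cast_ne_zero.mpr (Nat.factorial_ne_zero _)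
  push_cast
  field_simp
  ring

theorem stmt18_general (n : ℕ) (ρ : ℂ) (hρ1 : ρ ≠ 1) (ω : ℂ) :
    apostolBernoulliPoly n ω ρ =
      ∑ j ∈ Finset.range (n + 1), ∑ s ∈ Finset.range j,
        (-1 : ℂ) ^ (j - 1) * ((n.choose j : ℂ) / ((j - 1).choose s : ℂ)) *
          ((j : ℂ) / (ρ - 1) ^ j) * (s ! : ℂ) * bernsteinC (j - 1) s ρ *
          stirling2 (j - 1) s * ω ^ (n - j) := by
  rw [apostolBernoulliPoly_eq_sum_descFactorial_mul, sum_range_succ', range_zero, sum_empty,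
    add_zero]
  refine sum_congr rfl fun k hk => ?_
  rw [PowerSeries.coeff_inv_smul_exp_sub_one hρ1, mul_neg, mul_sum, ← sum_neg_distrib,
    Nat.add_sub_cancel]
  refine sum_congr rfl fun s hs => ?_
  exact (summand_bernsteinC_stirling2_eq (mem_range_succ_iff.mp hs) (mem_range.mp hk) ρ ω hρ1).symm

theorem stmt18 (n : ℕ) (ρ : ℂ) (hρ0 : ρ ≠ 0) (hρ1 : ρ ≠ 1) (ω : ℂ) :
    apostolBernoulliPoly n ω ρ =
      ∑ j ∈ Finset.range (n + 1), ∑ s ∈ Finset.range j,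
        (-1 : ℂ) ^ (j - 1) * ((n.choose j : ℂ) / ((j - 1).choose s : ℂ)) *
          ((j : ℂ) / (ρ - 1) ^ j) * (s ! : ℂ) * bernsteinC (j - 1) s ρ *
          stirling2 (j - 1) s * ω ^ (n - j) :=
  stmt18_general n ρ hρ1 ω
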